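/- For every positive integer n, the polynomial D_n(t) = t^9 - (n+3)t^8 - (n-4)t^7 + (2n-8)t^6 + (2n+8)t^5 + (2n-8)t^4 - (2n-11)t^3 + (3n-5)t^2 + (3n+4)t - 4(n+1) has at least one real root t_0 with t_0 > 2. -/
import Mathlib

open Polynomial

/-- The denominator polynomial `D_n(t)`, over `ℝ`. -/
noncomputable def Dpoly (n : ℕ) : Polynomial ℝ :=
  X ^ 9 - C ((n : ℝ) + 3) * X ^ 8 - C ((n : ℝ) - 4) * X ^ 7 + C (2 * (n : ℝ) - 8) * X ^ 6
    + C (2 * (n : ℝ) + 8) * X ^ 5 + C (2 * (n : ℝ) - 8) * X ^ 4 - C (2 * (n : ℝ) - 11) * X ^ 3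
    + C (3 * (n : ℝ) - 5) * X ^ 2 + C (3 * (n : ℝ) + 4) * X - C (4 * ((n : ℝ) + 1))

theorem stmt_2 (n : ℕ) (hn : 0 < n) :
    ∃ t : ℝ, 2 < t ∧ (Dpoly n).IsRoot t := by
  have hdeg : (Dpoly n).degree = 9 := by
    unfold Dpoly; compute_degree!
  have hlc : (Dpoly n).leadingCoeff = 1 := by
    have hnat : (Dpoly n).natDegree = 9 := by unfold Dpoly; compute_degree!
    rw [Polynomial.leadingCoeff, hnat]
    simp only [Dpoly, coeff_add, coeff_sub, coeff_C_mul, coeff_X_pow, coeff_C, coeff_X]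
    norm_num
  have htend : Filter.Tendsto (fun x => (Dpoly n).eval x) Filter.atTop Filter.atTop := by
    apply Polynomial.tendsto_atTop_of_leadingCoeff_nonneg
    · rw [hdeg]; norm_num
    · rw [hlc]; norm_num
  have h3 : (Dpoly n).eval 3 ≤ 0 := by
    have hn1 : (1 : ℝ) ≤ (n : ℝ) := by exact_mod_cast hn
    simp only [Dpoly, eval_add, eval_sub, eval_mul, eval_pow, eval_C, eval_X]
    nlinarith
  obtain ⟨b, hb⟩ := ((htend.eventually_ge_atTop 1).and (Filter.eventually_ge_atTop 3)).exists
  obtain ⟨hb1, hb3⟩ := hb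
  have hcont : ContinuousOn (fun x => (Dpoly n).eval x) (Set.Icc 3 b) :=
    (Dpoly n).continuous_aeval.continuousOn
  have : (0 : ℝ) ∈ Set.Icc ((Dpoly n).eval 3) ((Dpoly n).eval b) :=
    ⟨h3, by linarith⟩
  obtain ⟨t, ht, htr⟩ := intermediate_value_Icc hb3 hcont this
  exact ⟨t, by linarith [ht.1], htr⟩
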